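/- arXiv:1704.00497 — 2 statements merged into one kernel-verified Lean document; each statement's English description precedes it below -/
import Mathlib

section
/- For any rooted phylogenetic tree T on a finite set X with n ≥ 2 elements, the sum over all 2-element subsets {x,y} of X of the NEME coefficients α^T_{x,y} equals (n-1)/2, where α^T_{x,y} = (deg(lca(x,y)) - 2) / (2 · Σ_{{u,u'} ⊆ ch(lca(x,y))} |C(u)|·|C(u')|). -/
open Finset

/-- A rooted phylogenetic tree on `X`, encoded by its hierarchy of clusters:
the single child of the root corresponds to the cluster `univ`, leaves to singletons,
and the internal vertices to the clusters of the laminar family. -/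
structure RPhyloTree (X : Type*) [Fintype X] [DecidableEq X] where
  clusters : Finset (Finset X)
  top_mem : (Finset.univ : Finset X) ∈ clusters
  singleton_mem : ∀ x : X, ({x} : Finset X) ∈ clusters
  laminar : ∀ C ∈ clusters, ∀ D ∈ clusters, C ⊆ D ∨ D ⊆ C ∨ Disjoint C D

namespace RPhyloTree

variable {X : Type*} [Fintype X] [DecidableEq X]

/-- The children of the vertex (cluster) `C`: the maximal clusters strictly below `C`. -/
def children (t : RPhyloTree X) (C : Finset X) : Finset (Finset X) :=
  t.clusters.filter (fun A => A ⊂ C ∧ ∀ B ∈ t.clusters, A ⊂ B → ¬ B ⊂ C)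

/-- The lowest common ancestor of `x` and `y`: the smallest cluster containing both. -/
def lca (t : RPhyloTree X) (x y : X) : Finset X :=
  (t.clusters.filter fun C => x ∈ C ∧ y ∈ C).inf'
    ⟨Finset.univ, by simp [t.top_mem]⟩ id

/-- The NEME coefficient `α^T_{x,y} = (deg(lca(x,y)) - 2) /
(2 · Σ_{{u,u'} ⊆ ch(lca(x,y))} |C(u)|·|C(u')|)`.  Here the sum over ordered pairs of
distinct children (`offDiag`) equals twice the sum over unordered pairs, and the
degree of an internal vertex is the number of its children plus one. -/
noncomputable def coeff (t : RPhyloTree X) (x y : X) : ℝ :=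
  (((t.children (t.lca x y)).card : ℝ) - 1) /
    (∑ p ∈ (t.children (t.lca x y)).offDiag, ((p.1.card : ℝ) * (p.2.card : ℝ)))

/-- The NEME score `σ_D(T) = Σ_{{x,y}} α^T_{x,y} · D(x,y)`; the sum over ordered pairs
of distinct elements is twice the sum over unordered pairs. -/
noncomputable def score (t : RPhyloTree X) (D : X → X → ℝ) : ℝ :=
  (1 / 2) * ∑ p ∈ (Finset.univ : Finset X).offDiag, t.coeff p.1 p.2 * D p.1 p.2

/-- A rooted phylogenetic tree is binary if every internal vertex has exactly two children. -/
def IsBinary (t : RPhyloTree X) : Prop :=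
  ∀ C ∈ t.clusters, 2 ≤ C.card → (t.children C).card = 2

end RPhyloTree

/-- A dissimilarity on `X`: symmetric and vanishing on the diagonal. -/
def IsDissimilarity {X : Type*} (D : X → X → ℝ) : Prop :=
  (∀ x y, D x y = D y x) ∧ ∀ x, D x x = 0

namespace RPhyloTree

variable {X : Type*} [Fintype X] [DecidableEq X] (t : RPhyloTree X)

/-- Two clusters sharing a common nonempty subset are comparable. -/
lemma chain_of_mem {A C D : Finset X} (hA : A.Nonempty)
    (hC : C ∈ t.clusters) (hD : D ∈ t.clusters) (hAC : A ⊆ C) (hAD : A ⊆ D) :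
    C ⊆ D ∨ D ⊆ C := by
  rcases t.laminar C hC D hD with h | h | h
  · exact Or.inl h
  · exact Or.inr h
  · obtain ⟨x, hx⟩ := hA
    exact absurd (hAD hx) (Finset.disjoint_left.mp h (hAC hx))

/-- A nonempty finite chain has a least element. -/
lemma exists_least {F : Finset (Finset X)} (hne : F.Nonempty)
    (hchain : ∀ C ∈ F, ∀ D ∈ F, C ⊆ D ∨ D ⊆ C) :
    ∃ m ∈ F, ∀ B ∈ F, m ⊆ B := by
  obtain ⟨m, hm, hmin⟩ := F.exists_minimal hne
  refine ⟨m, hm, fun B hB => ?_⟩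
  rcases hchain m hm B hB with h | h
  · exact h
  · rcases eq_or_lt_of_le h with h' | h'
    · exact h' ▸ Finset.Subset.refl _
    · exact absurd h' (fun _ => lt_irrefl _ (lt_of_le_of_lt (hmin hB h'.le) h'))

lemma inf'_eq_least {F : Finset (Finset X)} (hne : F.Nonempty)
    {m : Finset X} (hm : m ∈ F) (hleast : ∀ B ∈ F, m ⊆ B) :
    F.inf' hne id = m :=
  subset_antisymm (inf'_le id hm) (le_inf' hne id hleast)

lemma mem_children_iff {A C : Finset X} :
    A ∈ t.children C ↔ A ∈ t.clusters ∧ A ⊂ C ∧ ∀ B ∈ t.clusters, A ⊂ B → ¬ B ⊂ C := by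
  simp [children, and_assoc]

/-- lca properties. -/
lemma lca_spec (x y : X) :
    t.lca x y ∈ t.clusters ∧ x ∈ t.lca x y ∧ y ∈ t.lca x y ∧
      ∀ B ∈ t.clusters, x ∈ B → y ∈ B → t.lca x y ⊆ B := by
  set F := t.clusters.filter fun C => x ∈ C ∧ y ∈ C with hF
  have hne : F.Nonempty := ⟨Finset.univ, by simp [hF, t.top_mem]⟩
  have hchain : ∀ C ∈ F, ∀ D ∈ F, C ⊆ D ∨ D ⊆ C := by
    intro C hC D hD
    simp only [hF, mem_filter] at hC hD
    exact t.chain_of_mem (A := {x}) ⟨x, by simp⟩ hC.1 hD.1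
      (by simp [hC.2.1]) (by simp [hD.2.1])
  obtain ⟨m, hm, hleast⟩ := exists_least hne hchain
  have : t.lca x y = m := inf'_eq_least hne hm hleast
  rw [this]
  simp only [hF, mem_filter] at hm
  exact ⟨hm.1, hm.2.1, hm.2.2, fun B hB hxB hyB => hleast B (by simp [hF, hB, hxB, hyB])⟩

/-- Parent: the least cluster strictly containing `A`. -/
noncomputable def parent (A : Finset X) : Finset X :=
  if h : (t.clusters.filter fun B => A ⊂ B).Nonempty
  then (t.clusters.filter fun B => A ⊂ B).inf' h id
  else ∅

lemma parent_spec {A : Finset X} (hA : A ∈ t.clusters) (hAne : A.Nonempty)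
    (hAu : A ≠ Finset.univ) :
    t.parent A ∈ t.clusters ∧ A ⊂ t.parent A ∧
      ∀ B ∈ t.clusters, A ⊂ B → t.parent A ⊆ B := by
  set F := t.clusters.filter fun B => A ⊂ B with hF
  have hne : F.Nonempty := ⟨Finset.univ, by
    simp only [hF, mem_filter]
    exact ⟨t.top_mem, lt_of_le_of_ne (subset_univ A) hAu⟩⟩
  have hchain : ∀ C ∈ F, ∀ D ∈ F, C ⊆ D ∨ D ⊆ C := by
    intro C hC D hD
    simp only [hF, mem_filter] at hC hD
    exact t.chain_of_mem hAne hC.1 hD.1 hC.2.subset hD.2.subset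
  obtain ⟨m, hm, hleast⟩ := exists_least hne hchain
  have hp : t.parent A = m := by
    rw [parent, dif_pos hne]; exact inf'_eq_least hne hm hleast
  rw [hp]
  simp only [hF, mem_filter] at hm
  exact ⟨hm.1, hm.2, fun B hB hAB => hleast B (by simp [hF, hB, hAB])⟩

/-- Characterization of children via parent. -/
lemma mem_children_iff_parent {A C : Finset X} (hA : A ∈ t.clusters) (hAne : A.Nonempty)
    (hAu : A ≠ Finset.univ) (hC : C ∈ t.clusters) :
    A ∈ t.children C ↔ C = t.parent A := by
  obtain ⟨hPc, hAP, hPleast⟩ := t.parent_spec hA hAne hAu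
  constructor
  · intro h
    rw [mem_children_iff] at h
    obtain ⟨-, hAC, hmax⟩ := h
    have h1 : t.parent A ⊆ C := hPleast C hC hAC
    rcases eq_or_lt_of_le h1 with h2 | h2
    · exact h2.symm
    · exact absurd h2 (hmax _ hPc hAP)
  · intro h
    subst h
    rw [mem_children_iff]
    refine ⟨hA, hAP, fun B hB hAB hBP => ?_⟩
    exact absurd (hPleast B hB hAB) (fun hc => (lt_irrefl _ (lt_of_lt_of_le hBP hc)))

/-- Children of an internal cluster are nonempty. -/
lemma child_nonempty {A C : Finset X} (hC2 : 2 ≤ C.card) (h : A ∈ t.children C) :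
    A.Nonempty := by
  rw [mem_children_iff] at h
  obtain ⟨hAc, hAC, hmax⟩ := h
  rcases A.eq_empty_or_nonempty with rfl | hne
  · obtain ⟨x, hx⟩ := Finset.card_pos.mp (by omega : 0 < C.card)
    have hxC : ({x} : Finset X) ⊂ C := by
      refine Finset.ssubset_iff_of_subset (by simp [hx]) |>.mpr ?_
      obtain ⟨y, hy, hyx⟩ := Finset.exists_mem_ne (s := C) (by omega) x
      exact ⟨y, hy, by simp [hyx]⟩
    exact absurd hxC (hmax {x} (t.singleton_mem x) (by simp))
  · exact hne

/-- Every element of an internal cluster lies in some child. -/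
lemma exists_mem_child {C : Finset X} (hC : C ∈ t.clusters) (hC2 : 2 ≤ C.card)
    {x : X} (hx : x ∈ C) : ∃ u ∈ t.children C, x ∈ u := by
  set F := t.clusters.filter fun B => x ∈ B ∧ B ⊂ C with hF
  have hxC : ({x} : Finset X) ⊂ C := by
    refine Finset.ssubset_iff_of_subset (by simp [hx]) |>.mpr ?_
    obtain ⟨y, hy, hyx⟩ := Finset.exists_mem_ne (s := C) (by omega) x
    exact ⟨y, hy, by simp [hyx]⟩
  have hne : F.Nonempty := ⟨{x}, by simp [hF, t.singleton_mem x, hxC]⟩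
  obtain ⟨u, hu, hmax⟩ := F.exists_maximal hne
  simp only [hF, mem_filter] at hu
  refine ⟨u, ?_, hu.2.1⟩
  rw [mem_children_iff]
  refine ⟨hu.1, hu.2.2, fun B hB huB hBC => ?_⟩
  exact lt_irrefl _ (lt_of_lt_of_le huB (hmax (by simp [hF, hB, huB.subset hu.2.1, hBC]) huB.le))

/-- Distinct children are disjoint. -/
lemma children_disjoint {A A' C : Finset X} (hA : A ∈ t.children C)
    (hA' : A' ∈ t.children C) (hne : A ≠ A') : Disjoint A A' := by
  rw [mem_children_iff] at hA hA'
  rcases t.laminar A hA.1 A' hA'.1 with h | h | h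
  · exact absurd hA'.2.1 (hA.2.2 A' hA'.1 (lt_of_le_of_ne h hne))
  · exact absurd hA.2.1 (hA'.2.2 A hA.1 (lt_of_le_of_ne h (Ne.symm hne)))
  · exact h

/-- A child is contained in `C`. -/
lemma child_subset {A C : Finset X} (h : A ∈ t.children C) : A ⊆ C :=
  ((t.mem_children_iff.mp h).2.1).subset

lemma lca_card_two {x y : X} (hxy : x ≠ y) : 2 ≤ (t.lca x y).card := by
  obtain ⟨-, hx, hy, -⟩ := t.lca_spec x y
  exact Finset.one_lt_card.mpr ⟨x, hx, y, hy, hxy⟩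

/-- If x≠y, they lie in distinct children of the lca. -/
lemma lca_children {x y : X} (hxy : x ≠ y) :
    ∃ u ∈ t.children (t.lca x y), ∃ u' ∈ t.children (t.lca x y),
      x ∈ u ∧ y ∈ u' ∧ u ≠ u' := by
  obtain ⟨hc, hx, hy, hmin⟩ := t.lca_spec x y
  have h2 := t.lca_card_two hxy
  obtain ⟨u, hu, hxu⟩ := t.exists_mem_child hc h2 hx
  obtain ⟨u', hu', hyu'⟩ := t.exists_mem_child hc h2 hy
  refine ⟨u, hu, u', hu', hxu, hyu', fun h => ?_⟩
  subst h
  have huc := (t.mem_children_iff.mp hu)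
  exact absurd (hmin u huc.1 hxu hyu') (fun hc' => huc.2.1.not_subset hc')

/-- Conversely: if x,y are in distinct children of C then lca x y = C. -/
lemma lca_eq_of_children {C u u' : Finset X} (hC : C ∈ t.clusters) (hC2 : 2 ≤ C.card)
    (hu : u ∈ t.children C) (hu' : u' ∈ t.children C) (huu' : u ≠ u')
    {x y : X} (hx : x ∈ u) (hy : y ∈ u') : t.lca x y = C := by
  obtain ⟨hlc, hlx, hly, hmin⟩ := t.lca_spec x y
  have hdisj := t.children_disjoint hu hu' huu'
  have hxC : x ∈ C := t.child_subset hu hx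
  have hyC : y ∈ C := t.child_subset hu' hy
  have h1 : t.lca x y ⊆ C := hmin C hC hxC hyC
  rcases eq_or_lt_of_le h1 with h | h
  · exact h
  · -- lca ⊂ C; compare lca with u and u'
    exfalso
    have hcu : u ⊆ t.lca x y ∨ t.lca x y ⊆ u :=
      t.chain_of_mem (A := {x}) ⟨x, by simp⟩ (t.mem_children_iff.mp hu).1 hlc
        (by simp [hx]) (by simp [hlx])
    have hcu' : u' ⊆ t.lca x y ∨ t.lca x y ⊆ u' :=
      t.chain_of_mem (A := {y}) ⟨y, by simp⟩ (t.mem_children_iff.mp hu').1 hlc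
        (by simp [hy]) (by simp [hly])
    have hul : u ⊆ t.lca x y := by
      rcases hcu with h' | h'
      · exact h'
      · exact absurd (h' hly) (fun hyu => Finset.disjoint_left.mp hdisj hyu hy)
    -- u ⊆ lca ⊂ C contradicts maximality of u unless u = lca; then u' ⊆ u impossible
    rcases eq_or_lt_of_le hul with h' | h'
    · rcases hcu' with h'' | h''
      · have hyu : y ∈ u := by rw [h']; exact h'' hy
        exact Finset.disjoint_left.mp hdisj hyu hy
      · have hxu' : x ∈ u' := h'' (by rw [← h']; exact hx)
        exact Finset.disjoint_left.mp hdisj hx hxu'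
    · exact (t.mem_children_iff.mp hu).2.2 _ hlc h' h

/-- Counting: the total number of children of internal clusters. -/
lemma sum_children_card (hn : 2 ≤ Fintype.card X) :
    ∑ C ∈ t.clusters.filter (fun C => 2 ≤ C.card), (t.children C).card + 1
      = (t.clusters.filter (fun C => 2 ≤ C.card)).card + Fintype.card X := by
  classical
  set I := t.clusters.filter (fun C => 2 ≤ C.card) with hI
  set N := t.clusters.filter (fun C : Finset X => C.Nonempty) with hN
  have huN : (Finset.univ : Finset X) ∈ N := by
    simp only [hN, mem_filter]
    exact ⟨t.top_mem, Finset.univ_nonempty_iff.mpr (Fintype.card_pos_iff.mp (by omega))⟩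
  have hmaps : ∀ A ∈ N.erase Finset.univ, t.parent A ∈ I := by
    intro A hA
    rw [Finset.mem_erase] at hA
    obtain ⟨hAu, hAN⟩ := hA
    simp only [hN, mem_filter] at hAN
    obtain ⟨hPc, hAP, -⟩ := t.parent_spec hAN.1 hAN.2 hAu
    simp only [hI, mem_filter]
    refine ⟨hPc, ?_⟩
    have h1 : 1 ≤ A.card := Finset.card_pos.mpr hAN.2
    have h2 : A.card < (t.parent A).card := Finset.card_lt_card hAP
    omega
  have hcount := Finset.card_eq_sum_card_fiberwise hmaps
  have hfib : ∀ C ∈ I, (N.erase Finset.univ).filter (fun A => t.parent A = C)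
      = t.children C := by
    intro C hC
    simp only [hI, mem_filter] at hC
    ext A
    simp only [mem_filter, Finset.mem_erase, hN, mem_filter]
    constructor
    · rintro ⟨⟨hAu, hAc, hAne⟩, hP⟩
      exact (t.mem_children_iff_parent hAc hAne hAu hC.1).mpr hP.symm
    · intro h
      have hAc := (t.mem_children_iff.mp h).1
      have hAne := t.child_nonempty hC.2 h
      have hAu : A ≠ Finset.univ := by
        intro hAu
        exact absurd (Finset.subset_univ C)
          (by rw [← hAu]; exact (t.mem_children_iff.mp h).2.1.not_subset)
      exact ⟨⟨hAu, hAc, hAne⟩, ((t.mem_children_iff_parent hAc hAne hAu hC.1).mp h).symm⟩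
  rw [Finset.sum_congr rfl (fun C hC => congrArg Finset.card (hfib C hC))] at hcount
  have hNcard : N.card = I.card + Fintype.card X := by
    have hsplit := Finset.card_filter_add_card_filter_not
      (s := N) (p := fun C : Finset X => 2 ≤ C.card)
    have h1 : N.filter (fun C => 2 ≤ C.card) = I := by
      ext C
      simp only [hN, hI, mem_filter, and_assoc]
      constructor
      · rintro ⟨h1, -, h3⟩; exact ⟨h1, h3⟩
      · rintro ⟨h1, h3⟩; exact ⟨h1, Finset.card_pos.mp (by omega), h3⟩
    have h2 : N.filter (fun C => ¬ 2 ≤ C.card) = (Finset.univ : Finset X).image (fun x : X => ({x} : Finset X)) := by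
      ext C
      simp only [hN, mem_filter, Finset.mem_image, Finset.mem_univ, true_and]
      constructor
      · rintro ⟨⟨h1, h2⟩, h3⟩
        have : C.card = 1 := by
          have := Finset.card_pos.mpr h2; omega
        obtain ⟨x, hx⟩ := Finset.card_eq_one.mp this
        exact ⟨x, hx.symm⟩
      · rintro ⟨x, rfl⟩
        exact ⟨⟨t.singleton_mem x, ⟨x, by simp⟩⟩, by simp⟩
    have h3 : ((Finset.univ : Finset X).image (fun x : X => ({x} : Finset X))).card = Fintype.card X := by
      rw [Finset.card_image_of_injective _
        (show Function.Injective (fun x : X => ({x} : Finset X)) from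
          fun a b h => by simpa using h)]
      exact Finset.card_univ
    rw [h1, h2, h3] at hsplit
    omega
  have herase : (N.erase Finset.univ).card = N.card - 1 := Finset.card_erase_of_mem huN
  have hNpos : 1 ≤ N.card := Finset.card_pos.mpr ⟨_, huN⟩
  omega

/-- The fiber of pairs with a given lca, as a biUnion over pairs of children. -/
lemma fiber_eq (C : Finset X) (hC : C ∈ t.clusters) (hC2 : 2 ≤ C.card) :
    (Finset.univ : Finset X).offDiag.filter (fun p => t.lca p.1 p.2 = C)
      = (t.children C).offDiag.biUnion (fun q => q.1 ×ˢ q.2) := by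
  ext p
  simp only [mem_filter, Finset.mem_offDiag, Finset.mem_biUnion, Finset.mem_product,
    Finset.mem_univ, true_and]
  constructor
  · rintro ⟨hne, hlca⟩
    obtain ⟨u, hu, u', hu', hx, hy, huu'⟩ := t.lca_children hne
    rw [hlca] at hu hu'
    exact ⟨(u, u'), ⟨hu, hu', huu'⟩, hx, hy⟩
  · rintro ⟨⟨u, u'⟩, ⟨hu, hu', huu'⟩, hx, hy⟩
    have hne : p.1 ≠ p.2 := by
      intro h
      rw [← h] at hy
      exact Finset.disjoint_left.mp (t.children_disjoint hu hu' huu') hx hy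
    exact ⟨hne, t.lca_eq_of_children hC hC2 hu hu' huu' hx hy⟩

lemma fiber_card (C : Finset X) (hC : C ∈ t.clusters) (hC2 : 2 ≤ C.card) :
    ((Finset.univ : Finset X).offDiag.filter (fun p => t.lca p.1 p.2 = C)).card
      = ∑ q ∈ (t.children C).offDiag, q.1.card * q.2.card := by
  rw [t.fiber_eq C hC hC2, Finset.card_biUnion]
  · exact Finset.sum_congr rfl fun q _ => Finset.card_product q.1 q.2
  · rintro ⟨u, u'⟩ hq ⟨v, v'⟩ hr hne
    rw [Finset.mem_coe, Finset.mem_offDiag] at hq hr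
    show Disjoint (u ×ˢ u') (v ×ˢ v')
    rw [Finset.disjoint_left]
    rintro ⟨a, b⟩ hab hab'
    rw [Finset.mem_product] at hab hab'
    rcases eq_or_ne u v with rfl | huv
    · rcases eq_or_ne u' v' with rfl | huv'
      · exact hne rfl
      · exact Finset.disjoint_left.mp (t.children_disjoint hq.2.1 hr.2.1 huv') hab.2 hab'.2
    · exact Finset.disjoint_left.mp (t.children_disjoint hq.1 hr.1 huv) hab.1 hab'.1

lemma fiber_nonempty (C : Finset X) (hC : C ∈ t.clusters) (hC2 : 2 ≤ C.card) :
    ((Finset.univ : Finset X).offDiag.filter (fun p => t.lca p.1 p.2 = C)).Nonempty := by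
  obtain ⟨x, hx⟩ := Finset.card_pos.mp (by omega : 0 < C.card)
  obtain ⟨u, hu, hxu⟩ := t.exists_mem_child hC hC2 hx
  have husub : u ⊂ C := (t.mem_children_iff.mp hu).2.1
  obtain ⟨y, hyC, hyu⟩ := Finset.exists_of_ssubset husub
  obtain ⟨u', hu', hyu'⟩ := t.exists_mem_child hC hC2 hyC
  have huu' : u ≠ u' := fun h => hyu (h ▸ hyu')
  refine ⟨(x, y), ?_⟩
  rw [mem_filter, Finset.mem_offDiag]
  have hxy : x ≠ y := fun h => hyu (h ▸ hxu)
  exact ⟨⟨Finset.mem_univ _, Finset.mem_univ _, hxy⟩,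
    t.lca_eq_of_children hC hC2 hu hu' huu' hxu hyu'⟩

end RPhyloTree

/-- For any rooted phylogenetic tree `T` on a finite set `X` with `n ≥ 2` elements, the
sum of the NEME coefficients `α^T_{x,y}` over all 2-element subsets `{x,y}` of `X`
equals `(n-1)/2`.  (The sum over ordered pairs of distinct elements is twice the sum
over unordered pairs.) -/
theorem stmt0 {X : Type*} [Fintype X] [DecidableEq X]
    (hn : 2 ≤ Fintype.card X) (t : RPhyloTree X) :
    (1 / 2) * ∑ p ∈ (Finset.univ : Finset X).offDiag, t.coeff p.1 p.2
      = ((Fintype.card X : ℝ) - 1) / 2 := by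
  classical
  open RPhyloTree in
  set I := t.clusters.filter (fun C => 2 ≤ C.card) with hI
  have hmaps : ∀ p ∈ (Finset.univ : Finset X).offDiag, t.lca p.1 p.2 ∈ I := by
    intro p hp
    rw [Finset.mem_offDiag] at hp
    simp only [hI, Finset.mem_filter]
    exact ⟨(t.lca_spec p.1 p.2).1, t.lca_card_two hp.2.2⟩
  rw [← Finset.sum_fiberwise_of_maps_to hmaps (fun p => t.coeff p.1 p.2)]
  have key : ∀ C ∈ I,
      ∑ p ∈ (Finset.univ : Finset X).offDiag.filter (fun p => t.lca p.1 p.2 = C),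
        t.coeff p.1 p.2 = ((t.children C).card : ℝ) - 1 := by
    intro C hC
    simp only [hI, Finset.mem_filter] at hC
    obtain ⟨hCc, hC2⟩ := hC
    set fib := (Finset.univ : Finset X).offDiag.filter (fun p => t.lca p.1 p.2 = C)
      with hfib
    set S : ℝ := ∑ q ∈ (t.children C).offDiag, ((q.1.card : ℝ) * (q.2.card : ℝ)) with hS
    have hconst : ∀ p ∈ fib, t.coeff p.1 p.2 = (((t.children C).card : ℝ) - 1) / S := by
      intro p hp
      rw [hfib, Finset.mem_filter] at hp
      rw [RPhyloTree.coeff, hp.2, hS]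
    rw [Finset.sum_congr rfl hconst, Finset.sum_const, nsmul_eq_mul]
    have hcard : (fib.card : ℝ) = S := by
      rw [hfib, t.fiber_card C hCc hC2, hS]
      push_cast
      rfl
    have hpos : 0 < fib.card := Finset.card_pos.mpr (t.fiber_nonempty C hCc hC2)
    have hSne : S ≠ 0 := by
      rw [← hcard]
      exact Nat.cast_ne_zero.mpr hpos.ne'
    rw [hcard]
    field_simp
  rw [Finset.sum_congr rfl key]
  have hsum := t.sum_children_card hn
  have hcast : ∑ C ∈ I, (((t.children C).card : ℝ) - 1)
      = (Fintype.card X : ℝ) - 1 := by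
    rw [Finset.sum_sub_distrib, Finset.sum_const, nsmul_eq_mul, mul_one]
    have h2 := congrArg (fun n : ℕ => (n : ℝ)) hsum
    push_cast at h2
    linarith [h2]
  rw [hcast]
  ring
end

section
/- Let g(δ_A, δ_B) = 1/2 + (n₁n₄+n₂n₃)/(2(n₁+n₂)(n₃+n₄)) − n₂/(2(n₁+n₂)) − (n₁+n₃)/(2(n₁+n₂+n₃)) + (1/2)[1/((n₁+n₂)(n₃+n₄)) − 1/((n₁+n₂)n₃)]·δ_A + (1/2)[1/((n₁+n₂)(n₃+n₄)) − 1/((n₁+n₂+n₃)n₄)]·δ_B, where n₁,n₂,n₃,n₄ are positive integers with n₁+n₂ > n₄. Then the coefficients of δ_A and δ_B in g are both negative, g(n₁n₃, n₂n₄) = 0, and consequently g(δ_A, δ_B) > 0 whenever δ_A < n₁n₃ and δ_B < n₂n₄. -/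
/-- The key algebraic inequality in the rNNI consistency proof:
for positive integers `n₁, n₂, n₃, n₄` with `n₁ + n₂ > n₄`, the affine function
`g(δ_A, δ_B)` has negative coefficients in `δ_A` and `δ_B`, vanishes at
`(n₁n₃, n₂n₄)`, and hence is positive whenever `δ_A < n₁n₃` and `δ_B < n₂n₄`. -/
theorem stmt9 (n₁ n₂ n₃ n₄ : ℕ) (h₁ : 0 < n₁) (h₂ : 0 < n₂) (h₃ : 0 < n₃) (h₄ : 0 < n₄)
    (hbig : n₄ < n₁ + n₂) (g : ℝ → ℝ → ℝ)
    (hg : ∀ δA δB : ℝ, g δA δB =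
      1 / 2 + ((n₁ : ℝ) * n₄ + n₂ * n₃) / (2 * (n₁ + n₂) * (n₃ + n₄))
        - (n₂ : ℝ) / (2 * (n₁ + n₂)) - ((n₁ : ℝ) + n₃) / (2 * (n₁ + n₂ + n₃))
        + (1 / 2) * (1 / ((n₁ + n₂) * (n₃ + n₄)) - 1 / (((n₁ : ℝ) + n₂) * n₃)) * δA
        + (1 / 2) * (1 / ((n₁ + n₂) * (n₃ + n₄)) - 1 / (((n₁ : ℝ) + n₂ + n₃) * n₄)) * δB) :
    ((1 / 2) * (1 / (((n₁ : ℝ) + n₂) * (n₃ + n₄)) - 1 / (((n₁ : ℝ) + n₂) * n₃)) < 0) ∧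
    ((1 / 2) * (1 / (((n₁ : ℝ) + n₂) * (n₃ + n₄)) - 1 / (((n₁ : ℝ) + n₂ + n₃) * n₄)) < 0) ∧
    g ((n₁ : ℝ) * n₃) ((n₂ : ℝ) * n₄) = 0 ∧
    (∀ δA δB : ℝ, δA < (n₁ : ℝ) * n₃ → δB < (n₂ : ℝ) * n₄ → 0 < g δA δB) := by
  have a1 : (0:ℝ) < n₁ := by exact_mod_cast h₁
  have a2 : (0:ℝ) < n₂ := by exact_mod_cast h₂
  have a3 : (0:ℝ) < n₃ := by exact_mod_cast h₃
  have a4 : (0:ℝ) < n₄ := by exact_mod_cast h₄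
  have hb : (n₄:ℝ) < n₁ + n₂ := by exact_mod_cast hbig
  have p12 : (0:ℝ) < (n₁:ℝ) + n₂ := by linarith
  have p34 : (0:ℝ) < (n₃:ℝ) + n₄ := by linarith
  have p123 : (0:ℝ) < (n₁:ℝ) + n₂ + n₃ := by linarith
  have c1 : (1 / 2) * (1 / (((n₁ : ℝ) + n₂) * (n₃ + n₄)) - 1 / (((n₁ : ℝ) + n₂) * n₃)) < 0 := by
    have h := div_lt_div_of_pos_left one_pos (by positivity : (0:ℝ) < ((n₁:ℝ)+n₂)*n₃)
      (by nlinarith : ((n₁:ℝ)+n₂)*n₃ < ((n₁:ℝ)+n₂)*(n₃+n₄))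
    linarith
  have c2 : (1 / 2) * (1 / (((n₁ : ℝ) + n₂) * (n₃ + n₄)) - 1 / (((n₁ : ℝ) + n₂ + n₃) * n₄)) < 0 := by
    have h := div_lt_div_of_pos_left one_pos (by positivity : (0:ℝ) < ((n₁:ℝ)+n₂+n₃)*n₄)
      (by nlinarith : ((n₁:ℝ)+n₂+n₃)*n₄ < ((n₁:ℝ)+n₂)*(n₃+n₄))
    linarith
  have hzero : g ((n₁ : ℝ) * n₃) ((n₂ : ℝ) * n₄) = 0 := by
    rw [hg]
    field_simp
    ring
  refine ⟨c1, c2, hzero, ?_⟩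
  intro δA δB hA hB
  have key : g δA δB = g ((n₁ : ℝ) * n₃) ((n₂ : ℝ) * n₄)
      + (1 / 2) * (1 / (((n₁ : ℝ) + n₂) * (n₃ + n₄)) - 1 / (((n₁ : ℝ) + n₂) * n₃)) * (δA - n₁ * n₃)
      + (1 / 2) * (1 / (((n₁ : ℝ) + n₂) * (n₃ + n₄)) - 1 / (((n₁ : ℝ) + n₂ + n₃) * n₄)) * (δB - n₂ * n₄) := by
    rw [hg, hg]; ring
  rw [key, hzero]
  have t1 : 0 < (1 / 2) * (1 / (((n₁ : ℝ) + n₂) * (n₃ + n₄)) - 1 / (((n₁ : ℝ) + n₂) * n₃)) * (δA - n₁ * n₃) :=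
    mul_pos_of_neg_of_neg c1 (by linarith)
  have t2 : 0 < (1 / 2) * (1 / (((n₁ : ℝ) + n₂) * (n₃ + n₄)) - 1 / (((n₁ : ℝ) + n₂ + n₃) * n₄)) * (δB - n₂ * n₄) :=
    mul_pos_of_neg_of_neg c2 (by linarith)
  linarith
end
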